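/- For every ν > −1 there exist constants 0 < c₁ ≤ c₂ < ∞ such that c₁ (1−x) ≤ φ_1^ν(x) ≤ c₂ (1−x) for all x ∈ (0,1), where φ_1^ν is the first Fourier-Bessel function. -/

import Mathlib

open MeasureTheory Real

/-- Bessel function of the first kind of order `ν`, defined by its power series
(valid for positive arguments). -/
noncomputable def besselJ (ν x : ℝ) : ℝ :=
  ∑' k : ℕ, ((-1 : ℝ) ^ k / (k.factorial * Real.Gamma (k + ν + 1))) *
    (x / 2) ^ (2 * (k : ℝ) + ν)

/-- The predicate that `Λ` enumerates the successive positive zeros of `J_ν`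
in increasing order (`Λ 0` is the first positive zero `λ_{1,ν}`). -/
def IsBesselZeros (ν : ℝ) (Λ : ℕ → ℝ) : Prop :=
  (∀ n, 0 < Λ n) ∧ StrictMono Λ ∧ (∀ n, besselJ ν (Λ n) = 0) ∧
    (∀ x, 0 < x → besselJ ν x = 0 → ∃ n, Λ n = x)

/-- The Fourier–Bessel function `φ_{n+1}^ν` (indexing starts at `n = 0`). -/
noncomputable def fbPhi (ν : ℝ) (Λ : ℕ → ℝ) (n : ℕ) (x : ℝ) : ℝ :=
  (Real.sqrt 2 / |Real.sqrt (Λ n) * besselJ (ν + 1) (Λ n)|) *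
    x ^ (-ν - 1 / 2 : ℝ) * Real.sqrt (Λ n * x) * besselJ ν (Λ n * x)

/-- The subordinated Fourier–Bessel kernel `G_t^{ν,α}(x,y)`. -/
noncomputable def fbKernel (ν α : ℝ) (Λ : ℕ → ℝ) (t x y : ℝ) : ℝ :=
  ∑' n : ℕ, Real.exp (-t * Λ n ^ α) * fbPhi ν Λ n x * fbPhi ν Λ n y

/-! Writing `J_ν(x) = (x/2)^ν F_ν((x/2)²)` with the entire series
`F_ν(u) = ∑ (-1)^k u^k / (k! Γ(k+ν+1))`, the first Fourier–Bessel function is a positive multiple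
of `q(x) = F_ν(λ²x²/4)`, and `q > 0` on `[0,1)` with `q(1) = 0`. Since `F_ν' = -F_{ν+1}` and
`F_ν = (ν+1) F_{ν+1} - u F_{ν+2}`, a common zero `u ≠ 0` of `F_ν` and `F_{ν+1}` would be a zero of
every `F_{ν+n}`, hence of every derivative of the analytic function `F_ν`, forcing `F_ν ≡ 0`;
so `q'(1) ≠ 0`. Then `q(x)/(1-x)`, extended by `-q'(1)` at `x = 1`, is continuous and positive
on `[0,1]`, and its extrema are the constants. -/

lemma IsPreconnected.pos_of_forall_ne_zero {X : Type*} [TopologicalSpace X] {s : Set X}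
    {f : X → ℝ} (hs : IsPreconnected s) (hf : ContinuousOn f s) {a : X} (ha : a ∈ s)
    (hfa : 0 < f a) (hne : ∀ x ∈ s, f x ≠ 0) {x : X} (hx : x ∈ s) : 0 < f x := by
  by_contra! hfx
  obtain ⟨c, hc, hfc⟩ := hs.intermediate_value hx ha hf ⟨hfx, hfa.le⟩
  exact hne c hc hfc

lemma exists_mul_sub_le_and_le_mul_sub {q : ℝ → ℝ} {a b D : ℝ} (hab : a < b)
    (hq : ContinuousOn q (Set.Icc a b)) (hpos : ∀ x ∈ Set.Ico a b, 0 < q x) (hqb : q b = 0)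
    (hD : HasDerivAt q D b) (hD₀ : D ≠ 0) :
    ∃ c₁ c₂ : ℝ, 0 < c₁ ∧ c₁ ≤ c₂ ∧
      ∀ x ∈ Set.Icc a b, c₁ * (b - x) ≤ q x ∧ q x ≤ c₂ * (b - x) := by
  -- `g x = q x / (b - x)` for `x ≠ b`, and `g b = -D`; the bounds are the extrema of `g`.
  set g : ℝ → ℝ := fun x => -dslope q b x
  have hqg : ∀ x, q x = g x * (b - x) := fun x => by
    have h := sub_smul_dslope q b x
    simp only [smul_eq_mul, hqb, sub_zero] at h
    simp only [g]
    linarith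
  have hg : ContinuousOn g (Set.Icc a b) := fun x hx => by
    rcases eq_or_ne x b with rfl | hxb
    · exact (continuousAt_dslope_same.2 hD.differentiableAt).neg.continuousWithinAt
    · exact ((continuousWithinAt_dslope_of_ne hxb).2 (hq x hx)).neg
  have hg_Ico : ∀ x ∈ Set.Ico a b, 0 < g x := fun x hx => by
    have := hpos x hx
    rw [hqg x] at this
    exact pos_of_mul_pos_left this (sub_pos.2 hx.2).le
  have hgb : g b = -D := by simp [g, hD.deriv]
  have hD_neg : D < 0 := by
    have : 0 ≤ g b := le_on_closure (fun x hx => (hg_Ico x hx).le) continuousOn_const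
      (by rwa [closure_Ico hab.ne]) (by rw [closure_Ico hab.ne]; exact Set.right_mem_Icc.2 hab.le)
    exact lt_of_le_of_ne (by linarith) hD₀
  have hg_pos : ∀ x ∈ Set.Icc a b, 0 < g x := fun x hx => by
    rcases hx.2.eq_or_lt with rfl | hxb
    · linarith
    · exact hg_Ico x ⟨hx.1, hxb⟩
  obtain ⟨x₁, hx₁, hmin⟩ := isCompact_Icc.exists_isMinOn (Set.nonempty_Icc.2 hab.le) hg
  obtain ⟨x₂, -, hmax⟩ := isCompact_Icc.exists_isMaxOn (Set.nonempty_Icc.2 hab.le) hg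
  refine ⟨g x₁, g x₂, hg_pos x₁ hx₁, hmax hx₁, fun x hx => ?_⟩
  have hbx : 0 ≤ b - x := sub_nonneg.2 hx.2
  rw [hqg x]
  exact ⟨mul_le_mul_of_nonneg_right (hmin hx) hbx, mul_le_mul_of_nonneg_right (hmax hx) hbx⟩

noncomputable def besselCoeff (μ : ℝ) (k : ℕ) : ℝ :=
  (-1 : ℝ) ^ k / (k.factorial * Real.Gamma (k + μ + 1))

noncomputable def besselSeries (μ u : ℝ) : ℝ := ∑' k : ℕ, besselCoeff μ k * u ^ k

section BesselSeries

open Filter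
open scoped NNReal ENNReal

variable {μ : ℝ}

lemma natCast_add_add_one_pos (hμ : -1 < μ) (k : ℕ) : 0 < (k : ℝ) + μ + 1 := by
  linarith [k.cast_nonneg (α := ℝ)]

lemma besselCoeff_ne_zero (hμ : -1 < μ) (k : ℕ) : besselCoeff μ k ≠ 0 := by
  have := Real.Gamma_pos_of_pos (natCast_add_add_one_pos hμ k)
  unfold besselCoeff
  positivity

lemma natCast_add_one_mul_besselCoeff_succ (k : ℕ) :
    ((k : ℝ) + 1) * besselCoeff μ (k + 1) = -besselCoeff (μ + 1) k := by
  have hf : (k.factorial : ℝ) ≠ 0 := by positivity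
  rw [besselCoeff, besselCoeff, Nat.factorial_succ, pow_succ]
  push_cast
  rw [show (k : ℝ) + 1 + μ + 1 = k + (μ + 1) + 1 by ring]
  rcases eq_or_ne (Real.Gamma ((k : ℝ) + (μ + 1) + 1)) 0 with hg | hg
  · simp [hg]
  · field_simp

lemma besselCoeff_eq_mul_besselCoeff_add_one (hμ : -1 < μ) (k : ℕ) :
    besselCoeff μ k = ((k : ℝ) + μ + 1) * besselCoeff (μ + 1) k := by
  have hk := natCast_add_add_one_pos hμ k
  have hf : (k.factorial : ℝ) ≠ 0 := by positivity
  have hg : Real.Gamma (k + μ + 1) ≠ 0 := (Real.Gamma_pos_of_pos hk).ne'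
  rw [besselCoeff, besselCoeff, show (k : ℝ) + (μ + 1) + 1 = k + μ + 1 + 1 by ring,
    Real.Gamma_add_one hk.ne']
  field_simp

lemma norm_besselCoeff_succ_div (hμ : -1 < μ) (k : ℕ) :
    ‖besselCoeff μ (k + 1)‖ / ‖besselCoeff μ k‖ = 1 / (((k : ℝ) + 1) * ((k : ℝ) + μ + 1)) := by
  have hk := natCast_add_add_one_pos hμ k
  have hsucc : besselCoeff μ (k + 1) = -besselCoeff (μ + 1) k / ((k : ℝ) + 1) := by
    rw [← natCast_add_one_mul_besselCoeff_succ]; field_simp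
  have hne := besselCoeff_ne_zero (by linarith : -1 < μ + 1) k
  rw [hsucc, besselCoeff_eq_mul_besselCoeff_add_one hμ, norm_div, norm_neg, norm_mul,
    Real.norm_of_nonneg hk.le, Real.norm_of_nonneg (by positivity : (0 : ℝ) ≤ k + 1)]
  field_simp

lemma radius_ofScalars_besselCoeff (hμ : -1 < μ) :
    (FormalMultilinearSeries.ofScalars ℝ (besselCoeff μ)).radius = ⊤ := by
  refine FormalMultilinearSeries.ofScalars_radius_eq_top_of_tendsto ℝ _
    (.of_forall (besselCoeff_ne_zero hμ)) ?_
  simp_rw [norm_besselCoeff_succ_div hμ]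
  refine tendsto_const_nhds.div_atTop (tendsto_atTop_add_const_right _ 1
    tendsto_natCast_atTop_atTop |>.atTop_mul_atTop₀ ?_)
  exact tendsto_atTop_add_const_right _ 1 (tendsto_atTop_add_const_right _ μ
    tendsto_natCast_atTop_atTop)

lemma summable_norm_besselCoeff_mul_pow (hμ : -1 < μ) (r : ℝ≥0) :
    Summable fun k => ‖besselCoeff μ k‖ * (r : ℝ) ^ k := by
  refine (FormalMultilinearSeries.summable_norm_mul_pow (r := r) _
      (by rw [radius_ofScalars_besselCoeff hμ]; exact ENNReal.coe_lt_top)).congr fun k => ?_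
  rw [FormalMultilinearSeries.ofScalars_norm]

lemma hasSum_besselSeries (hμ : -1 < μ) (u : ℝ) :
    HasSum (fun k => besselCoeff μ k * u ^ k) (besselSeries μ u) := by
  refine (Summable.of_norm_bounded (summable_norm_besselCoeff_mul_pow hμ ‖u‖₊) fun k => ?_).hasSum
  simp [norm_mul, norm_pow]

lemma hasFPowerSeriesOnBall_besselSeries (hμ : -1 < μ) :
    HasFPowerSeriesOnBall (besselSeries μ) (FormalMultilinearSeries.ofScalars ℝ (besselCoeff μ))
      0 ⊤ := by
  have h := (FormalMultilinearSeries.ofScalars ℝ (besselCoeff μ)).hasFPowerSeriesOnBall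
    (by rw [radius_ofScalars_besselCoeff hμ]; exact ENNReal.zero_lt_top)
  rw [radius_ofScalars_besselCoeff hμ] at h
  convert h using 1
  funext u
  simp [besselSeries, FormalMultilinearSeries.sum, mul_comm]

lemma analyticOnNhd_besselSeries (hμ : -1 < μ) : AnalyticOnNhd ℝ (besselSeries μ) Set.univ :=
  fun _ _ => (hasFPowerSeriesOnBall_besselSeries hμ).analyticAt_of_mem (by simp)

lemma hasDerivAt_besselSeries (hμ : -1 < μ) (y : ℝ) :
    HasDerivAt (besselSeries μ) (-besselSeries (μ + 1) y) y := by
  have hμ₁ : -1 < μ + 1 := by linarith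
  have hterm : ∀ (k : ℕ) (z : ℝ), besselCoeff μ (k + 1) * (((k + 1 : ℕ) : ℝ) * z ^ (k + 1 - 1))
      = -(besselCoeff (μ + 1) k * z ^ k) := fun k z => by
    push_cast
    linear_combination z ^ k * natCast_add_one_mul_besselCoeff_succ (μ := μ) k
  set R : ℝ≥0 := ‖y‖₊ + 1
  have hy : y ∈ Metric.ball (0 : ℝ) R := by simp [R]
  have hbound : ∀ (n : ℕ) (z : ℝ), z ∈ Metric.ball (0 : ℝ) R →
      ‖besselCoeff μ n * (n * z ^ (n - 1))‖
        ≤ ‖besselCoeff (μ + 1) (n - 1)‖ * (R : ℝ) ^ (n - 1) := by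
    rintro (_ | k) z hz
    · simp only [CharP.cast_eq_zero, zero_mul, mul_zero, norm_zero]; positivity
    · rw [hterm, norm_neg, norm_mul, norm_pow, Nat.add_sub_cancel]
      gcongr
      exact (mem_ball_zero_iff.1 hz).le
  have hsummable : Summable fun n => ‖besselCoeff (μ + 1) (n - 1)‖ * (R : ℝ) ^ (n - 1) :=
    (summable_nat_add_iff 1).mp (summable_norm_besselCoeff_mul_pow hμ₁ R)
  have hderiv := hasDerivAt_tsum_of_isPreconnected hsummable Metric.isOpen_ball
    (convex_ball _ _).isPreconnected (fun n z _ => (hasDerivAt_pow n z).const_mul _) hbound hy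
    (hasSum_besselSeries hμ y).summable hy
  have hval : HasSum (fun n => besselCoeff μ n * (n * y ^ (n - 1))) (-besselSeries (μ + 1) y) := by
    rw [← hasSum_nat_add_iff' 1]
    simp only [hterm, Finset.sum_range_one, CharP.cast_eq_zero, zero_mul, mul_zero, sub_zero]
    exact (hasSum_besselSeries hμ₁ y).neg
  rwa [hval.tsum_eq] at hderiv

lemma besselSeries_zero_pos (hμ : -1 < μ) : 0 < besselSeries μ 0 := by
  rw [besselSeries, tsum_eq_single 0 fun k hk => by simp [zero_pow hk]]
  have := Real.Gamma_pos_of_pos (natCast_add_add_one_pos hμ 0)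
  simpa [besselCoeff] using this

lemma besselSeries_eq_mul_add_one_sub_mul_add_two (hμ : -1 < μ) (u : ℝ) :
    besselSeries μ u = (μ + 1) * besselSeries (μ + 1) u - u * besselSeries (μ + 2) u := by
  have hμ₁ : -1 < μ + 1 := by linarith
  have hcoeff : ∀ k : ℕ, besselCoeff μ k - (μ + 1) * besselCoeff (μ + 1) k
      = k * besselCoeff (μ + 1) k := fun k => by
    rw [besselCoeff_eq_mul_besselCoeff_add_one hμ]; ring
  have hleft := (hasSum_besselSeries hμ u).sub ((hasSum_besselSeries hμ₁ u).mul_left (μ + 1))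
  have hright : HasSum
      (fun k => besselCoeff μ k * u ^ k - (μ + 1) * (besselCoeff (μ + 1) k * u ^ k))
      (-u * besselSeries (μ + 2) u) := by
    have hshift : ∀ k : ℕ, besselCoeff μ (k + 1) * u ^ (k + 1)
        - (μ + 1) * (besselCoeff (μ + 1) (k + 1) * u ^ (k + 1))
        = -u * (besselCoeff (μ + 2) k * u ^ k) := fun k => by
      have h := natCast_add_one_mul_besselCoeff_succ (μ := μ + 1) k
      rw [show μ + 1 + 1 = μ + 2 by ring] at h
      have hc := hcoeff (k + 1)
      push_cast at hc
      linear_combination u ^ (k + 1) * hc + u ^ (k + 1) * h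
    have hfirst : besselCoeff μ 0 * u ^ 0 - (μ + 1) * (besselCoeff (μ + 1) 0 * u ^ 0) = 0 := by
      simpa using hcoeff 0
    rw [← hasSum_nat_add_iff' 1, Finset.sum_range_one, hfirst, sub_zero]
    simp only [hshift]
    exact (hasSum_besselSeries (μ := μ + 2) (by linarith) u).mul_left (-u)
  linarith [hleft.unique hright]

lemma iteratedDeriv_besselSeries (hμ : -1 < μ) (n : ℕ) :
    iteratedDeriv n (besselSeries μ) = fun u => (-1) ^ n * besselSeries (μ + n) u := by
  induction n with
  | zero => funext u; simp
  | succ k ih =>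
    funext u
    rw [iteratedDeriv_succ, ih, ((hasDerivAt_besselSeries (by linarith [k.cast_nonneg (α := ℝ)])
      u).const_mul _).deriv]
    push_cast
    ring_nf

lemma besselSeries_add_two_eq_zero (hμ : -1 < μ) {u : ℝ} (hu : u ≠ 0)
    (h₀ : besselSeries μ u = 0) (h₁ : besselSeries (μ + 1) u = 0) :
    besselSeries (μ + 2) u = 0 := by
  have h := besselSeries_eq_mul_add_one_sub_mul_add_two hμ u
  rw [h₀, h₁] at h
  exact (mul_eq_zero.1 (by linarith)).resolve_left hu

lemma besselSeries_add_one_ne_zero (hμ : -1 < μ) {u : ℝ} (hu : u ≠ 0)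
    (h₀ : besselSeries μ u = 0) : besselSeries (μ + 1) u ≠ 0 := by
  intro h₁
  have hzero : ∀ n : ℕ, besselSeries (μ + n) u = 0 ∧ besselSeries (μ + n + 1) u = 0 := by
    intro n
    induction n with
    | zero => simpa using ⟨h₀, h₁⟩
    | succ k ih =>
      have h₂ := besselSeries_add_two_eq_zero (by linarith [k.cast_nonneg (α := ℝ)]) hu ih.1 ih.2
      push_cast
      exact ⟨by simpa [add_assoc] using ih.2, by simpa [add_assoc, one_add_one_eq_two] using h₂⟩
  have hord : analyticOrderAt (besselSeries μ) u = ⊤ :=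
    ENat.eq_top_iff_forall_ge.2 fun n =>
      (natCast_le_analyticOrderAt_iff_iteratedDeriv_eq_zero
        (analyticOnNhd_besselSeries hμ u (Set.mem_univ u))).2
        fun i _ => by simp [iteratedDeriv_besselSeries hμ, (hzero i).1]
  have h0 : besselSeries μ 0 = 0 :=
    (analyticOnNhd_besselSeries hμ).eqOn_zero_of_preconnected_of_eventuallyEq_zero
      isPreconnected_univ (Set.mem_univ u) (analyticOrderAt_eq_top.1 hord) (Set.mem_univ 0)
  exact (besselSeries_zero_pos hμ).ne' h0

end BesselSeries

lemma besselJ_eq_rpow_mul_besselSeries (μ : ℝ) {x : ℝ} (hx : 0 < x) :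
    besselJ μ x = (x / 2) ^ μ * besselSeries μ ((x / 2) ^ 2) := by
  rw [besselJ, besselSeries, ← tsum_mul_left]
  refine tsum_congr fun k => ?_
  rw [Real.rpow_add (by positivity), show 2 * (k : ℝ) = ((2 * k : ℕ) : ℝ) by push_cast; ring,
    Real.rpow_natCast, pow_mul, besselCoeff]
  ring

lemma besselJ_eq_zero_iff (μ : ℝ) {x : ℝ} (hx : 0 < x) :
    besselJ μ x = 0 ↔ besselSeries μ ((x / 2) ^ 2) = 0 := by
  rw [besselJ_eq_rpow_mul_besselSeries μ hx, mul_eq_zero, or_iff_right (by positivity)]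

lemma besselSeries_pos_of_forall_besselJ_ne_zero {ν l : ℝ} (hν : -1 < ν) (hl : 0 < l)
    (hmin : ∀ z : ℝ, 0 < z → z < l → besselJ ν z ≠ 0) {x : ℝ} (hx : x ∈ Set.Ico (0 : ℝ) 1) :
    0 < besselSeries ν ((l / 2) ^ 2 * x ^ 2) := by
  have hcont : Continuous fun y => besselSeries ν ((l / 2) ^ 2 * y ^ 2) :=
    (analyticOnNhd_besselSeries hν).continuousOn.comp_continuous (by fun_prop) fun _ => trivial
  refine isPreconnected_Ico.pos_of_forall_ne_zero hcont.continuousOn (Set.left_mem_Ico.2 one_pos)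
    (by simpa using besselSeries_zero_pos hν) (fun y ⟨hy₀, hy₁⟩ hy => ?_) hx
  rcases hy₀.eq_or_lt with rfl | hy₀
  · exact (besselSeries_zero_pos hν).ne' (by simpa using hy)
  · refine hmin (l * y) (by positivity) (by nlinarith)
      ((besselJ_eq_zero_iff ν (by positivity)).2 ?_)
    rwa [show (l * y / 2) ^ 2 = (l / 2) ^ 2 * y ^ 2 by ring]

lemma fbPhi_eq_mul_besselSeries (ν : ℝ) (Λ : ℕ → ℝ) (n : ℕ) (hΛ : 0 < Λ n) {x : ℝ}
    (hx : 0 < x) :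
    fbPhi ν Λ n x = Real.sqrt 2 / |Real.sqrt (Λ n) * besselJ (ν + 1) (Λ n)| *
      Real.sqrt (Λ n) * (Λ n / 2) ^ ν * besselSeries ν ((Λ n / 2) ^ 2 * x ^ 2) := by
  have hx_rpow : x ^ (-ν - 1 / 2 : ℝ) * x ^ (1 / 2 : ℝ) * x ^ ν = 1 := by
    rw [← Real.rpow_add hx, ← Real.rpow_add hx, show -ν - 1 / 2 + 1 / 2 + ν = 0 by ring,
      Real.rpow_zero]
  rw [fbPhi, besselJ_eq_rpow_mul_besselSeries ν (by positivity), Real.sqrt_mul hΛ.le,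
    Real.sqrt_eq_rpow x, show Λ n * x / 2 = Λ n / 2 * x by ring,
    Real.mul_rpow (by positivity) hx.le, mul_pow]
  linear_combination (Real.sqrt 2 / |Real.sqrt (Λ n) * besselJ (ν + 1) (Λ n)| *
      Real.sqrt (Λ n) * (Λ n / 2) ^ ν * besselSeries ν ((Λ n / 2) ^ 2 * x ^ 2)) * hx_rpow

/-- The first Fourier–Bessel function satisfies `φ_1^ν(x) ≍ 1 - x` on `(0,1)`.
Here `l₁` is the smallest positive zero of `J_ν`. -/
theorem fb_first_eigenfunction_bounds (ν : ℝ) (hν : -1 < ν) (l₁ : ℝ) (hpos : 0 < l₁)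
    (hzero : besselJ ν l₁ = 0) (hmin : ∀ z : ℝ, 0 < z → z < l₁ → besselJ ν z ≠ 0) :
    ∃ c₁ c₂ : ℝ, 0 < c₁ ∧ c₁ ≤ c₂ ∧
      ∀ x : ℝ, x ∈ Set.Ioo (0 : ℝ) 1 →
        c₁ * (1 - x) ≤ fbPhi ν (fun _ => l₁) 0 x ∧
        fbPhi ν (fun _ => l₁) 0 x ≤ c₂ * (1 - x) := by
  set u₀ := (l₁ / 2) ^ 2
  have hF₀ : besselSeries ν u₀ = 0 := (besselJ_eq_zero_iff ν hpos).1 hzero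
  have hF₁ : besselSeries (ν + 1) u₀ ≠ 0 := besselSeries_add_one_ne_zero hν (by positivity) hF₀
  set q : ℝ → ℝ := fun x => besselSeries ν (u₀ * x ^ 2)
  have hq : Continuous q :=
    (analyticOnNhd_besselSeries hν).continuousOn.comp_continuous (by fun_prop) fun _ => trivial
  have hq_deriv : HasDerivAt q (-besselSeries (ν + 1) u₀ * (2 * u₀)) 1 :=
    ((hasDerivAt_besselSeries hν u₀).comp_of_eq (1 : ℝ)
      ((hasDerivAt_pow 2 (1 : ℝ)).const_mul u₀) (by ring)).congr_deriv (by ring)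
  obtain ⟨c₁, c₂, hc₁, hc₁₂, hbounds⟩ := exists_mul_sub_le_and_le_mul_sub one_pos hq.continuousOn
    (fun x hx => besselSeries_pos_of_forall_besselJ_ne_zero hν hpos hmin hx)
    (by simpa [q] using hF₀) hq_deriv (mul_ne_zero (neg_ne_zero.2 hF₁) (by positivity))
  have hJ₁ : besselJ (ν + 1) l₁ ≠ 0 := (besselJ_eq_zero_iff (ν + 1) hpos).not.2 hF₁
  have hnorm : 0 < |Real.sqrt l₁ * besselJ (ν + 1) l₁| :=
    abs_pos.2 (mul_ne_zero (by positivity) hJ₁)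
  set B := Real.sqrt 2 / |Real.sqrt l₁ * besselJ (ν + 1) l₁| * Real.sqrt l₁ * (l₁ / 2) ^ ν
  have hB : 0 < B := by positivity
  refine ⟨B * c₁, B * c₂, by positivity, by gcongr, fun x hx => ?_⟩
  have hφ : fbPhi ν (fun _ => l₁) 0 x = B * q x := fbPhi_eq_mul_besselSeries ν _ 0 hpos hx.1
  obtain ⟨h₁, h₂⟩ := hbounds x (Set.Ioo_subset_Icc_self hx)
  rw [hφ, mul_assoc B, mul_assoc B]
  exact ⟨mul_le_mul_of_nonneg_left h₁ hB.le, mul_le_mul_of_nonneg_left h₂ hB.le⟩
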